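/- For every smooth function f on an open set U ⊆ ℝⁿ, every k ∈ {1,…,n}, and all i, j ∈ {1,…,n−k+1}, the following identity holds on U: ∂_k (E_n(f)_{ij}) = E_{n−k+1}(∂_k f)_{ij} + ∂_i ∂_{k+j−1} f − ∂_j ∂_{k+i−1} f + Σ_{s=n−k+2}^{n} u^{s−j+1} ∂_i ∂_s ∂_k f − Σ_{s=n−k+2}^{n} u^{s−i+1} ∂_j ∂_s ∂_k f. -/

import Mathlib

/-- Partial derivative `∂_i f` with 1-based index `i ∈ {1,…,n}` (zero outside that
range). -/
noncomputable def pdN {n : ℕ} (i : ℕ) (f : (Fin n → ℝ) → ℝ) : (Fin n → ℝ) → ℝ :=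
  if h : 1 ≤ i ∧ i ≤ n then
    fun x => fderiv ℝ f x (Pi.single (⟨i - 1, by omega⟩ : Fin n) 1)
  else 0

/-- The coordinate function `u^i` with 1-based index `i ∈ {1,…,n}` (zero outside
that range). -/
def coordN {n : ℕ} (i : ℕ) : (Fin n → ℝ) → ℝ :=
  if h : 1 ≤ i ∧ i ≤ n then fun x => x ⟨i - 1, by omega⟩ else 0

/-- `a₀` solves the single Jordan block equation of size `n` on `U`:
for all `i, j ∈ {1,…,n}`,
`Σ_{s=i+1}^{n} u^{s−i+1} ∂_s ∂_j a₀ − Σ_{s=j+1}^{n} u^{s−j+1} ∂_s ∂_i a₀ = 0` on `U`. -/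
def SolvesJordan (n : ℕ) (U : Set (Fin n → ℝ)) (a₀ : (Fin n → ℝ) → ℝ) : Prop :=
  ∀ i j : ℕ, 1 ≤ i → i ≤ n → 1 ≤ j → j ≤ n → ∀ x ∈ U,
    (∑ s ∈ Finset.Icc (i + 1) n, coordN (s - i + 1) x * pdN s (pdN j a₀) x)
      - (∑ s ∈ Finset.Icc (j + 1) n, coordN (s - j + 1) x * pdN s (pdN i a₀) x) = 0

/-- `E_M(g)_{ij} = Σ_{s=j+1}^{M} u^{s−j+1} ∂_i ∂_s g − Σ_{s=i+1}^{M} u^{s−i+1} ∂_j ∂_s g`,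
the coordinate form of `d·d_L g` for a single Jordan block of size `M`. -/
noncomputable def Efun {n : ℕ} (M : ℕ) (g : (Fin n → ℝ) → ℝ) (i j : ℕ) :
    (Fin n → ℝ) → ℝ :=
  fun x => (∑ s ∈ Finset.Icc (j + 1) M, coordN (s - j + 1) x * pdN i (pdN s g) x)
         - (∑ s ∈ Finset.Icc (i + 1) M, coordN (s - i + 1) x * pdN j (pdN s g) x)

noncomputable def bv (n : ℕ) (i : ℕ) : Fin n → ℝ :=
  if h : 1 ≤ i ∧ i ≤ n then Pi.single (⟨i - 1, by omega⟩ : Fin n) 1 else 0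

lemma pdN_apply {n : ℕ} (i : ℕ) (h1 : 1 ≤ i) (h2 : i ≤ n) (f : (Fin n → ℝ) → ℝ) :
    pdN i f = fun x => fderiv ℝ f x (bv n i) := by
  rw [pdN, dif_pos ⟨h1, h2⟩, bv, dif_pos ⟨h1, h2⟩]

lemma top_add_one_le : ((⊤ : ℕ∞) : WithTop ℕ∞) + 1 ≤ ((⊤ : ℕ∞) : WithTop ℕ∞) := by
  norm_cast

lemma contDiffAt_pdN {n : ℕ} (i : ℕ) (h1 : 1 ≤ i) (h2 : i ≤ n) {f : (Fin n → ℝ) → ℝ}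
    {x : Fin n → ℝ} (hf : ContDiffAt ℝ (⊤ : ℕ∞) f x) :
    ContDiffAt ℝ (⊤ : ℕ∞) (pdN i f) x := by
  rw [pdN_apply i h1 h2]
  exact (hf.fderiv_right top_add_one_le).clm_apply contDiffAt_const

lemma diffAt_pdN {n : ℕ} (i : ℕ) (h1 : 1 ≤ i) (h2 : i ≤ n) {f : (Fin n → ℝ) → ℝ}
    {x : Fin n → ℝ} (hf : ContDiffAt ℝ (⊤ : ℕ∞) f x) :
    DifferentiableAt ℝ (pdN i f) x :=
  (contDiffAt_pdN i h1 h2 hf).differentiableAt (by simp)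

lemma pdN_pdN_eq {n : ℕ} (a b : ℕ) (ha1 : 1 ≤ a) (ha2 : a ≤ n) (hb1 : 1 ≤ b) (hb2 : b ≤ n)
    {f : (Fin n → ℝ) → ℝ} {x : Fin n → ℝ} (hf : ContDiffAt ℝ (⊤ : ℕ∞) f x) :
    pdN a (pdN b f) x = fderiv ℝ (fderiv ℝ f) x (bv n a) (bv n b) := by
  rw [pdN_apply a ha1 ha2, pdN_apply b hb1 hb2]
  have hdf : DifferentiableAt ℝ (fderiv ℝ f) x :=
    (hf.fderiv_right top_add_one_le).differentiableAt (by simp)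
  show fderiv ℝ (fun y => (fderiv ℝ f y) (bv n b)) x (bv n a) = _
  rw [fderiv_clm_apply hdf (differentiableAt_const _)]
  simp

lemma pdN_comm {n : ℕ} (a b : ℕ) (ha1 : 1 ≤ a) (ha2 : a ≤ n) (hb1 : 1 ≤ b) (hb2 : b ≤ n)
    {f : (Fin n → ℝ) → ℝ} {x : Fin n → ℝ} (hf : ContDiffAt ℝ (⊤ : ℕ∞) f x) :
    pdN a (pdN b f) x = pdN b (pdN a f) x := by
  rw [pdN_pdN_eq a b ha1 ha2 hb1 hb2 hf, pdN_pdN_eq b a hb1 hb2 ha1 ha2 hf]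
  exact hf.isSymmSndFDerivAt (by rw [minSmoothness_of_isRCLikeNormedField]; exact WithTop.coe_le_coe.mpr (le_top : (2 : ℕ∞) ≤ ⊤)) _ _

lemma pdN_apply' {n : ℕ} (i : ℕ) (h1 : 1 ≤ i) (h2 : i ≤ n) (f : (Fin n → ℝ) → ℝ)
    (x : Fin n → ℝ) : pdN i f x = fderiv ℝ f x (bv n i) :=
  congrFun (pdN_apply i h1 h2 f) x

lemma coordN_hasFDerivAt {n : ℕ} (m : ℕ) (h1 : 1 ≤ m) (h2 : m ≤ n) (x : Fin n → ℝ) :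
    HasFDerivAt (coordN m)
      (ContinuousLinearMap.proj (⟨m - 1, by omega⟩ : Fin n) : (Fin n → ℝ) →L[ℝ] ℝ) x := by
  rw [coordN, dif_pos ⟨h1, h2⟩]
  exact (ContinuousLinearMap.proj (R := ℝ) (φ := fun _ : Fin n => ℝ) (⟨m - 1, by omega⟩ : Fin n)).hasFDerivAt

lemma fderiv_coordN_bv {n : ℕ} (m k : ℕ) (h1 : 1 ≤ m) (h2 : m ≤ n) (hk1 : 1 ≤ k)
    (hk2 : k ≤ n) (x : Fin n → ℝ) :
    fderiv ℝ (coordN m) x (bv n k) = if m = k then 1 else 0 := by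
  rw [(coordN_hasFDerivAt m h1 h2 x).fderiv, bv, dif_pos ⟨hk1, hk2⟩]
  have h : ((⟨m - 1, by omega⟩ : Fin n) = ⟨k - 1, by omega⟩) ↔ m = k := by
    rw [Fin.ext_iff]; simp; omega
  simp only [ContinuousLinearMap.proj_apply, Pi.single_apply, h]

lemma pdN_swap23 {n : ℕ} {U : Set (Fin n → ℝ)} (hU : IsOpen U) {f : (Fin n → ℝ) → ℝ}
    (hf : ContDiffOn ℝ (⊤ : ℕ∞) f U) (i k s : ℕ)
    (hi1 : 1 ≤ i) (hi2 : i ≤ n) (hk1 : 1 ≤ k) (hk2 : k ≤ n) (hs1 : 1 ≤ s) (hs2 : s ≤ n)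
    {x : Fin n → ℝ} (hx : x ∈ U) :
    pdN i (pdN k (pdN s f)) x = pdN i (pdN s (pdN k f)) x := by
  have hev : pdN k (pdN s f) =ᶠ[nhds x] pdN s (pdN k f) := by
    filter_upwards [hU.mem_nhds hx] with y hy
    exact pdN_comm k s hk1 hk2 hs1 hs2 ((hf y hy).contDiffAt (hU.mem_nhds hy))
  rw [pdN_apply' i hi1 hi2, pdN_apply' i hi1 hi2, hev.fderiv_eq]

lemma pdN_rot {n : ℕ} {U : Set (Fin n → ℝ)} (hU : IsOpen U) {f : (Fin n → ℝ) → ℝ}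
    (hf : ContDiffOn ℝ (⊤ : ℕ∞) f U) (k i s : ℕ)
    (hk1 : 1 ≤ k) (hk2 : k ≤ n) (hi1 : 1 ≤ i) (hi2 : i ≤ n) (hs1 : 1 ≤ s) (hs2 : s ≤ n)
    {x : Fin n → ℝ} (hx : x ∈ U) :
    pdN k (pdN i (pdN s f)) x = pdN i (pdN s (pdN k f)) x := by
  have hfx : ContDiffAt ℝ (⊤ : ℕ∞) f x := (hf x hx).contDiffAt (hU.mem_nhds hx)
  rw [pdN_comm k i hk1 hk2 hi1 hi2 (contDiffAt_pdN s hs1 hs2 hfx)]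
  exact pdN_swap23 hU hf i k s hi1 hi2 hk1 hk2 hs1 hs2 hx

lemma fderiv_S {n : ℕ} {U : Set (Fin n → ℝ)} (hU : IsOpen U) {f : (Fin n → ℝ) → ℝ}
    (hf : ContDiffOn ℝ (⊤ : ℕ∞) f U) (k i j : ℕ)
    (hk1 : 1 ≤ k) (hkn : k ≤ n) (hi1 : 1 ≤ i) (hin : i ≤ n) (hj1 : 1 ≤ j) (hjn : j ≤ n)
    {x : Fin n → ℝ} (hx : x ∈ U) :
    fderiv ℝ (fun y => ∑ s ∈ Finset.Icc (j + 1) n, coordN (s - j + 1) y * pdN i (pdN s f) y) x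
        (bv n k)
      = ∑ s ∈ Finset.Icc (j + 1) n,
          (coordN (s - j + 1) x * pdN k (pdN i (pdN s f)) x
            + pdN i (pdN s f) x * (if s - j + 1 = k then 1 else 0)) := by
  have hfx : ContDiffAt ℝ (⊤ : ℕ∞) f x := (hf x hx).contDiffAt (hU.mem_nhds hx)
  have hd : ∀ s ∈ Finset.Icc (j + 1) n,
      DifferentiableAt ℝ (fun y => coordN (s - j + 1) y * pdN i (pdN s f) y) x := by
    intro s hs
    simp only [Finset.mem_Icc] at hs
    exact ((coordN_hasFDerivAt (s - j + 1) (by omega) (by omega) x).differentiableAt).mul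
      (diffAt_pdN i hi1 hin (contDiffAt_pdN s (by omega) (by omega) hfx))
  rw [fderiv_fun_sum hd, ContinuousLinearMap.sum_apply]
  refine Finset.sum_congr rfl fun s hs => ?_
  simp only [Finset.mem_Icc] at hs
  rw [fderiv_fun_mul ((coordN_hasFDerivAt (s - j + 1) (by omega) (by omega) x).differentiableAt)
      (diffAt_pdN i hi1 hin (contDiffAt_pdN s (by omega) (by omega) hfx)),
    ContinuousLinearMap.add_apply, ContinuousLinearMap.smul_apply,
    ContinuousLinearMap.smul_apply, smul_eq_mul, smul_eq_mul,
    fderiv_coordN_bv (s - j + 1) k (by omega) (by omega) hk1 hkn x,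
    ← pdN_apply' k hk1 hkn]

lemma delta_sum {n : ℕ} (k j : ℕ) (hk1 : 1 ≤ k) (hkn : k ≤ n) (hj1 : 1 ≤ j)
    (hj : j ≤ n - k + 1) (g : ℕ → ℝ) :
    (∑ s ∈ Finset.Icc (j + 1) n, g s * (if s - j + 1 = k then 1 else 0))
      = if 2 ≤ k then g (k + j - 1) else 0 := by
  have h1 : ∀ s ∈ Finset.Icc (j + 1) n,
      g s * (if s - j + 1 = k then 1 else 0) = if s = k + j - 1 then g s else 0 := by
    intro s hs
    simp only [Finset.mem_Icc] at hs
    by_cases h : s = k + j - 1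
    · rw [if_pos h, if_pos (by omega), mul_one]
    · rw [if_neg h, if_neg (by omega), mul_zero]
  rw [Finset.sum_congr rfl h1, Finset.sum_ite_eq' (Finset.Icc (j + 1) n) (k + j - 1) g]
  by_cases h2 : 2 ≤ k
  · rw [if_pos h2, if_pos (by simp only [Finset.mem_Icc]; omega)]
  · rw [if_neg h2, if_neg (by simp only [Finset.mem_Icc]; omega)]

/-- The identity relating `∂_k (E_n(f)_{ij})` to `E_{n−k+1}(∂_k f)_{ij}`. -/
theorem stmt13 {n : ℕ} (U : Set (Fin n → ℝ)) (hU : IsOpen U)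
    (f : (Fin n → ℝ) → ℝ) (hf : ContDiffOn ℝ (⊤ : ℕ∞) f U)
    (k : ℕ) (hk1 : 1 ≤ k) (hkn : k ≤ n)
    (i j : ℕ) (hi1 : 1 ≤ i) (hi : i ≤ n - k + 1) (hj1 : 1 ≤ j) (hj : j ≤ n - k + 1) :
    ∀ x ∈ U,
      pdN k (Efun n f i j) x
        = Efun (n - k + 1) (pdN k f) i j x
          + pdN i (pdN (k + j - 1) f) x - pdN j (pdN (k + i - 1) f) x
          + (∑ s ∈ Finset.Icc (n - k + 2) n, coordN (s - j + 1) x * pdN i (pdN s (pdN k f)) x)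
          - (∑ s ∈ Finset.Icc (n - k + 2) n, coordN (s - i + 1) x * pdN j (pdN s (pdN k f)) x) := by
  intro x hx
  have hfx : ContDiffAt ℝ (⊤ : ℕ∞) f x := (hf x hx).contDiffAt (hU.mem_nhds hx)
  have hin : i ≤ n := by omega
  have hjn : j ≤ n := by omega
  have hdsum : ∀ (a b : ℕ), 1 ≤ a → a ≤ n → 1 ≤ b →
      DifferentiableAt ℝ
        (fun y => ∑ s ∈ Finset.Icc (b + 1) n, coordN (s - b + 1) y * pdN a (pdN s f) y) x := by
    intro a b ha1 ha2 hb1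
    refine DifferentiableAt.fun_sum fun s hs => ?_
    simp only [Finset.mem_Icc] at hs
    exact ((coordN_hasFDerivAt (s - b + 1) (by omega) (by omega) x).differentiableAt).mul
      (diffAt_pdN a ha1 ha2 (contDiffAt_pdN s (by omega) (by omega) hfx))
  rw [pdN_apply' k hk1 hkn]
  unfold Efun
  rw [fderiv_fun_sub (hdsum i j hi1 hin hj1) (hdsum j i hj1 hjn hi1),
    ContinuousLinearMap.sub_apply,
    fderiv_S hU hf k i j hk1 hkn hi1 hin hj1 hjn hx,
    fderiv_S hU hf k j i hk1 hkn hj1 hjn hi1 hin hx,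
    Finset.sum_add_distrib, Finset.sum_add_distrib,
    delta_sum k j hk1 hkn hj1 hj (fun s => pdN i (pdN s f) x),
    delta_sum k i hk1 hkn hi1 hi (fun s => pdN j (pdN s f) x)]
  have hrot : ∀ (a b : ℕ), 1 ≤ a → a ≤ n → 1 ≤ b → b ≤ n - k + 1 →
      (∑ s ∈ Finset.Icc (b + 1) n, coordN (s - b + 1) x * pdN k (pdN a (pdN s f)) x)
      = (∑ s ∈ Finset.Icc (b + 1) (n - k + 1), coordN (s - b + 1) x * pdN a (pdN s (pdN k f)) x)
        + ∑ s ∈ Finset.Icc (n - k + 2) n, coordN (s - b + 1) x * pdN a (pdN s (pdN k f)) x := by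
    intro a b ha1 ha2 hb1 hb2
    have h1 : ∀ s ∈ Finset.Icc (b + 1) n, coordN (s - b + 1) x * pdN k (pdN a (pdN s f)) x
        = coordN (s - b + 1) x * pdN a (pdN s (pdN k f)) x := by
      intro s hs
      simp only [Finset.mem_Icc] at hs
      rw [pdN_rot hU hf k a s hk1 hkn ha1 ha2 (by omega) (by omega) hx]
    rw [Finset.sum_congr rfl h1]
    have e1 : Finset.Icc (b + 1) n = Finset.Ioc b n := by rw [Finset.Icc_add_one_left_eq_Ioc]
    have e2 : Finset.Icc (b + 1) (n - k + 1) = Finset.Ioc b (n - k + 1) := by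
      rw [Finset.Icc_add_one_left_eq_Ioc]
    have e3 : Finset.Icc (n - k + 2) n = Finset.Ioc (n - k + 1) n := by
      rw [← Finset.Icc_add_one_left_eq_Ioc]; rfl
    rw [e1, e2, e3]
    exact (Finset.sum_Ioc_consecutive _ (by omega) (by omega)).symm
  rw [hrot i j hi1 hin hj1 hj, hrot j i hj1 hjn hi1 hi]
  by_cases hk2 : 2 ≤ k
  · rw [if_pos hk2, if_pos hk2]; ring
  · have hke : k = 1 := by omega
    rw [if_neg hk2, if_neg hk2]
    have e1 : k + j - 1 = j := by omega
    have e2 : k + i - 1 = i := by omega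
    rw [e1, e2, pdN_comm i j hi1 hin hj1 hjn hfx]
    ring
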